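/- If G is strictly lower triangular over a field and T = (I - G)^{-1}, then for any l > j, knowledge of the entries T_{ki} for all pairs with j ≤ i < k ≤ l uniquely determines G_{lj}; that is, if two strictly lower triangular matrices G and G' yield matrices T and T' agreeing on all such entries, then G_{lj} = G'_{lj}. -/

import Mathlib

/-!
Since `T (1 - G) = 1`, we have `T = 1 + T G`. Both `1 - G` and its inverse `T` are lower
triangular, so reading this identity at `(m, j)` with `j < m` and using `T m m = 1` gives
`G m j = T m j - ∑_{j < p < m} T m p G p j`. By strong induction on `m`, every `G m j` with
`j < m ≤ l` is therefore a function of the entries `T k i` with `j ≤ i < k ≤ l`.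
-/

open Finset

namespace Matrix

variable {ι R : Type*} [DecidableEq ι] [LinearOrder ι] [CommRing R]
  {G : Matrix ι ι R}

theorem isLowerTriangular_one_sub (hG : ∀ i j, i ≤ j → G i j = 0) :
    (1 - G).IsLowerTriangular := by
  intro i j (hij : i < j)
  simp [hij.ne, hG i j hij.le]

variable [Fintype ι]

theorem det_one_sub_eq_one (hG : ∀ i j, i ≤ j → G i j = 0) : (1 - G).det = 1 := by
  rw [det_of_isLowerTriangular _ (isLowerTriangular_one_sub hG)]
  simp [hG _ _ le_rfl]

theorem inv_one_sub_apply_of_lt (hG : ∀ i j, i ≤ j → G i j = 0) {i j : ι} (h : i < j) :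
    (1 - G)⁻¹ i j = 0 := by
  have := (1 - G).invertibleOfIsUnitDet (by simp [det_one_sub_eq_one hG])
  exact blockTriangular_inv_of_blockTriangular (isLowerTriangular_one_sub hG) h

variable [LocallyFiniteOrder ι]

theorem inv_one_sub_apply (hG : ∀ i j, i ≤ j → G i j = 0) (m j : ι) :
    (1 - G)⁻¹ m j = (1 : Matrix ι ι R) m j + ∑ p ∈ Ioc j m, (1 - G)⁻¹ m p * G p j := by
  have hinv : (1 - G)⁻¹ * (1 - G) = 1 :=
    nonsing_inv_mul _ (by simp [det_one_sub_eq_one hG])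
  have hfix : (1 - G)⁻¹ = 1 + (1 - G)⁻¹ * G := by
    rw [Matrix.mul_sub, Matrix.mul_one] at hinv
    exact sub_eq_iff_eq_add.1 hinv
  conv_lhs => rw [hfix]
  rw [add_apply, mul_apply]
  congr 1
  refine (sum_subset (subset_univ _) fun p _ hp => ?_).symm
  rcases not_and_or.1 (mem_Ioc.not.1 hp) with hpj | hmp
  · rw [hG p j (not_lt.1 hpj), mul_zero]
  · rw [inv_one_sub_apply_of_lt hG (not_le.1 hmp), zero_mul]

theorem inv_one_sub_apply_self (hG : ∀ i j, i ≤ j → G i j = 0) (m : ι) :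
    (1 - G)⁻¹ m m = 1 := by
  simpa using inv_one_sub_apply hG m m

theorem apply_eq_inv_one_sub_sub_sum (hG : ∀ i j, i ≤ j → G i j = 0) {m j : ι} (hjm : j < m) :
    G m j = (1 - G)⁻¹ m j - ∑ p ∈ Ioo j m, (1 - G)⁻¹ m p * G p j := by
  rw [inv_one_sub_apply hG m j, one_apply_ne hjm.ne', zero_add,
    ← add_sum_erase _ _ (right_mem_Ioc.2 hjm), Ioc_erase_right, inv_one_sub_apply_self hG,
    one_mul, add_sub_cancel_right]

end Matrix

open Matrix in
/-- If two strictly lower triangular matrices `G`, `G'` yield transfer matrices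
`T = (I - G)⁻¹`, `T' = (I - G')⁻¹` that agree on all entries `T k i` with
`j ≤ i < k ≤ l`, then `G l j = G' l j`: the entry `G l j` is uniquely determined
by those entries of `T`. -/
theorem stmt_18 {n : ℕ} {K : Type*} [Field K] (G G' T T' : Matrix (Fin n) (Fin n) K)
    (hG : ∀ i j : Fin n, i ≤ j → G i j = 0)
    (hG' : ∀ i j : Fin n, i ≤ j → G' i j = 0)
    (hT : T = (1 - G)⁻¹) (hT' : T' = (1 - G')⁻¹)
    (l j : Fin n) (hlj : j < l)
    (hagree : ∀ k i : Fin n, j ≤ i → i < k → k ≤ l → T k i = T' k i) :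
    G l j = G' l j := by
  subst hT hT'
  suffices ∀ m, j < m → m ≤ l → G m j = G' m j from this l hlj le_rfl
  intro m
  induction m using WellFoundedLT.induction with
  | _ m ih =>
    intro hjm hml
    rw [apply_eq_inv_one_sub_sub_sum hG hjm, apply_eq_inv_one_sub_sub_sum hG' hjm,
      hagree m j le_rfl hjm hml]
    refine congrArg _ (sum_congr rfl fun p hp => ?_)
    obtain ⟨hjp, hpm⟩ := mem_Ioo.1 hp
    rw [hagree m p hjp.le hpm hml, ih p hpm hjp (hpm.le.trans hml)]
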